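/- arXiv:2406.09791 — 3 statements merged into one kernel-verified Lean document; each statement's English description precedes it below -/
import Mathlib

section
/- Fix an integer Q ≥ 1, an integer N ≥ 1, a subset 𝒳 ⊆ ℂ, and nonnegative integers P_1,…,P_N, D_0, D_1,…,D_N and K_s ≥ Q+1. For n = 1,…,N let P_n ∈ 𝒳^{P_n×Q}, D_0 ∈ 𝒳^{D_0×Q}, D_n ∈ 𝒳^{D_n×Q}, set X_n = [P_n 1_{P_n}; D_0 1_{D_0}; D_n 1_{D_n}] ∈ ℂ^{(P_n+D_0+D_n)×(Q+1)} (vertical block concatenation, last column all ones), let A_n ∈ ℂ^{(Q+1)×K_s}, and set Y_n = X_n A_n; assume rank(X_n) = rank(A_n) = Q+1 for all n. Suppose that for each n we are given another factorization Y_n = T_n V_n with rank(T_n) = rank(V_n) = Q+1, where T_n = [P_n 1_{P_n}; U_0 1_{D_0}; U_n 1_{D_n}] for some U_0 ∈ 𝒳^{D_0×Q} and U_n ∈ 𝒳^{D_n×Q}, and V_n ∈ ℂ^{(Q+1)×K_s}. Let P = [P_1; …; P_N] ∈ ℂ^{P×Q} with P = P_1+⋯+P_N. If (a) rank([P 1_P])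 = Q+1, and (b) there exists m ∈ {1,…,N} such that for every n ∈ {1,…,N}, (null([P_n 1_{P_n}]) + null([P_m 1_{P_m}])) ∩ null([D_0 1_{D_0}]) = {0} (sum and intersection of subspaces of ℂ^{Q+1}), then T_n = X_n and V_n = A_n for every n; in particular U_0 = D_0 and U_n = D_n for every n. -/
open Matrix

/-- Horizontal augmentation of a matrix with an all-ones column: `[M 1]`. -/
def augOnes {m : Type*} {Q : ℕ} (M : Matrix m (Fin Q) ℂ) :
    Matrix m (Fin Q ⊕ Fin 1) ℂ :=
  Matrix.fromCols M (Matrix.of fun _ _ => (1 : ℂ))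

/-- The structured symbol matrix `[P_n 1; D_0 1; D_n 1]` of the encoding rule. -/
def symbolMatrix {Q Pn D0 Dn : ℕ}
    (P : Matrix (Fin Pn) (Fin Q) ℂ)
    (D0mat : Matrix (Fin D0) (Fin Q) ℂ)
    (Dmat : Matrix (Fin Dn) (Fin Q) ℂ) :
    Matrix (Fin Pn ⊕ (Fin D0 ⊕ Fin Dn)) (Fin Q ⊕ Fin 1) ℂ :=
  Matrix.fromRows (augOnes P) (Matrix.fromRows (augOnes D0mat) (augOnes Dmat))

/-- The vertical stack `P = [P_1; …; P_N]` of the per-subchannel pilot matrices. -/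
def pilotStack {Q N : ℕ} (Psz : Fin N → ℕ)
    (Pmat : ∀ n : Fin N, Matrix (Fin (Psz n)) (Fin Q) ℂ) :
    Matrix ((n : Fin N) × Fin (Psz n)) (Fin Q) ℂ :=
  Matrix.of fun i j => Pmat i.1 i.2 j

/-!
Since `V_n` has full row rank it has a right inverse `W_n`, so `T_n = X_n G_n` with the
mixing matrix `G_n = A_n W_n`. Reading this block by block, the common pilot block gives
`[P_n 1] G_n = [P_n 1]` and the common data block gives `[D_0 1] G_n = [U_0 1]` for every `n`.
Hence every column of `G_n - G_m` lies in `(null [P_n 1] + null [P_m 1]) ∩ null [D_0 1]`,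
which is trivial by (b), so all `G_n` agree; then `[P 1] G_m = [P 1]` and (a) force `G_m = 1`.
-/

namespace Matrix

section CommRing

variable {R : Type*} [CommRing R] {l m n : Type*} [Fintype n]

theorem col_mem_ker_mulVecLin_of_mul_eq_zero {M : Matrix m n R} {B : Matrix n l R}
    (h : M * B = 0) (j : l) : B.col j ∈ LinearMap.ker M.mulVecLin :=
  congr(($h).col j)

theorem mul_left_cancel_of_mulVec_injective {M : Matrix m n R}
    (hM : Function.Injective M.mulVec) {B C : Matrix n l R} (h : M * B = M * C) : B = C :=
  ext_col fun j => hM congr(($h).col j)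

variable [DecidableEq n]

theorem eq_of_mul_eq_self_of_ker_sup_inf_ker_eq_bot {a b c : Type*}
    {P₁ : Matrix a n R} {P₂ : Matrix b n R} {D : Matrix c n R}
    (hker : (LinearMap.ker P₁.mulVecLin ⊔ LinearMap.ker P₂.mulVecLin) ⊓
      LinearMap.ker D.mulVecLin = ⊥)
    {G₁ G₂ : Matrix n n R} (h₁ : P₁ * G₁ = P₁) (h₂ : P₂ * G₂ = P₂) (hD : D * G₁ = D * G₂) :
    G₁ = G₂ := by
  rw [← sub_eq_zero]
  refine ext_col fun j => ?_
  have hP₁ : P₁ * (G₁ - 1) = 0 := by rw [Matrix.mul_sub, Matrix.mul_one, h₁, sub_self]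
  have hP₂ : P₂ * (G₂ - 1) = 0 := by rw [Matrix.mul_sub, Matrix.mul_one, h₂, sub_self]
  have hsup : (G₁ - G₂).col j ∈ LinearMap.ker P₁.mulVecLin ⊔ LinearMap.ker P₂.mulVecLin := by
    have hsplit : (G₁ - G₂).col j = (G₁ - 1).col j - (G₂ - 1).col j := by
      ext i; simp
    rw [hsplit]
    exact Submodule.sub_mem_sup (col_mem_ker_mulVecLin_of_mul_eq_zero hP₁ j)
      (col_mem_ker_mulVecLin_of_mul_eq_zero hP₂ j)
  have hD₀ : (G₁ - G₂).col j ∈ LinearMap.ker D.mulVecLin :=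
    col_mem_ker_mulVecLin_of_mul_eq_zero (by rw [Matrix.mul_sub, hD, sub_self]) j
  have hmem := Submodule.mem_inf.2 ⟨hsup, hD₀⟩
  rw [hker] at hmem
  exact (Submodule.mem_bot R).1 hmem

theorem eq_one_of_mul_eq_self_of_sigma_stack {ι : Type*} {κ : ι → Type*}
    (M : ∀ i, Matrix (κ i) n R)
    (hM : Function.Injective (Matrix.of fun r : (i : ι) × κ i => M r.1 r.2).mulVec)
    {G : Matrix n n R} (hG : ∀ i, M i * G = M i) : G = 1 := by
  refine mul_left_cancel_of_mulVec_injective hM ?_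
  rw [Matrix.mul_one]
  ext ⟨i, r⟩ k
  simpa [mul_apply] using congrFun₂ (hG i) r k

end CommRing

section Field

variable {K : Type*} [Field K] {m n : Type*} [Fintype n]

theorem mulVec_injective_of_rank_eq_card_width {M : Matrix m n K}
    (h : M.rank = Fintype.card n) : Function.Injective M.mulVec := by
  have hker : Module.finrank K (LinearMap.ker M.mulVecLin) = 0 := by
    have := M.mulVecLin.finrank_range_add_finrank_ker
    rw [Module.finrank_fintype_fun_eq_card] at this
    change M.rank + _ = _ at this
    omega
  rw [← coe_mulVecLin, ← LinearMap.ker_eq_bot]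
  exact Submodule.finrank_eq_zero.mp hker

theorem exists_mul_eq_one_of_rank_eq_card_height [Fintype m] [DecidableEq m] {M : Matrix m n K}
    (h : M.rank = Fintype.card m) : ∃ W : Matrix n m K, M * W = 1 := by
  rw [← mulVec_surjective_iff_exists_right_inverse, ← coe_mulVecLin, ← LinearMap.range_eq_top]
  apply Submodule.eq_top_of_finrank_eq
  rw [Module.finrank_fintype_fun_eq_card]
  exact h

end Field

end Matrix

theorem augOnes_injective {m : Type*} {Q : ℕ} :
    Function.Injective (augOnes : Matrix m (Fin Q) ℂ → Matrix m (Fin Q ⊕ Fin 1) ℂ) :=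
  fun _ _ h => (fromCols_inj h).1

theorem augOnes_pilotStack {Q N : ℕ} (Psz : Fin N → ℕ)
    (Pmat : ∀ n : Fin N, Matrix (Fin (Psz n)) (Fin Q) ℂ) :
    augOnes (pilotStack Psz Pmat) = Matrix.of fun r => augOnes (Pmat r.1) r.2 :=
  rfl

theorem symbolMatrix_mul_eq_symbolMatrix_iff {Q Pn D0 Dn : ℕ}
    (P : Matrix (Fin Pn) (Fin Q) ℂ) (D₀ U₀ : Matrix (Fin D0) (Fin Q) ℂ)
    (D U : Matrix (Fin Dn) (Fin Q) ℂ) (G : Matrix (Fin Q ⊕ Fin 1) (Fin Q ⊕ Fin 1) ℂ) :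
    symbolMatrix P D₀ D * G = symbolMatrix P U₀ U ↔
      augOnes P * G = augOnes P ∧ augOnes D₀ * G = augOnes U₀ ∧ augOnes D * G = augOnes U := by
  simp only [symbolMatrix, fromRows_mul, fromRows_ext_iff]

theorem noiseless_unique_recovery_general
    (Q N Ks D0sz : ℕ)
    (Psz Dsz : Fin N → ℕ)
    (Pmat : ∀ n : Fin N, Matrix (Fin (Psz n)) (Fin Q) ℂ)
    (D0mat : Matrix (Fin D0sz) (Fin Q) ℂ)
    (Dmat : ∀ n : Fin N, Matrix (Fin (Dsz n)) (Fin Q) ℂ)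
    (A : ∀ n : Fin N, Matrix (Fin Q ⊕ Fin 1) (Fin Ks) ℂ)
    (hrankX : ∀ n : Fin N, (symbolMatrix (Pmat n) D0mat (Dmat n)).rank = Q + 1)
    (U0 : Matrix (Fin D0sz) (Fin Q) ℂ)
    (Un : ∀ n : Fin N, Matrix (Fin (Dsz n)) (Fin Q) ℂ)
    (V : ∀ n : Fin N, Matrix (Fin Q ⊕ Fin 1) (Fin Ks) ℂ)
    (hrankV : ∀ n : Fin N, (V n).rank = Q + 1)
    (hfact : ∀ n : Fin N,
      symbolMatrix (Pmat n) D0mat (Dmat n) * A n =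
        symbolMatrix (Pmat n) U0 (Un n) * V n)
    (ha : (augOnes (pilotStack Psz Pmat)).rank = Q + 1)
    (hb : ∃ m : Fin N, ∀ n : Fin N,
      (LinearMap.ker (augOnes (Pmat n)).mulVecLin ⊔
        LinearMap.ker (augOnes (Pmat m)).mulVecLin) ⊓
        LinearMap.ker (augOnes D0mat).mulVecLin = ⊥) :
    (∀ n : Fin N, symbolMatrix (Pmat n) U0 (Un n) = symbolMatrix (Pmat n) D0mat (Dmat n)) ∧
    (∀ n : Fin N, V n = A n) ∧
    U0 = D0mat ∧ (∀ n : Fin N, Un n = Dmat n) := by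
  obtain ⟨m, hbm⟩ := hb
  have hcard : Fintype.card (Fin Q ⊕ Fin 1) = Q + 1 := by simp
  choose W hW using fun n => exists_mul_eq_one_of_rank_eq_card_height ((hrankV n).trans hcard.symm)
  have hmix : ∀ n, symbolMatrix (Pmat n) D0mat (Dmat n) * (A n * W n) =
      symbolMatrix (Pmat n) U0 (Un n) := fun n => by
    rw [← Matrix.mul_assoc, hfact, Matrix.mul_assoc, hW, Matrix.mul_one]
  choose hP hD0 hD using fun n => (symbolMatrix_mul_eq_symbolMatrix_iff _ _ _ _ _ _).1 (hmix n)
  have hG : ∀ n, A n * W n = A m * W m := fun n =>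
    eq_of_mul_eq_self_of_ker_sup_inf_ker_eq_bot (hbm n) (hP n) (hP m) ((hD0 n).trans (hD0 m).symm)
  have hGm : A m * W m = 1 := by
    refine eq_one_of_mul_eq_self_of_sigma_stack (fun n => augOnes (Pmat n)) ?_ fun n => ?_
    · rw [← augOnes_pilotStack]
      exact mulVec_injective_of_rank_eq_card_width (ha.trans hcard.symm)
    · rw [← hG n, hP n]
  have hG1 : ∀ n, A n * W n = 1 := fun n => (hG n).trans hGm
  have hT : ∀ n, symbolMatrix (Pmat n) U0 (Un n) = symbolMatrix (Pmat n) D0mat (Dmat n) :=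
    fun n => by rw [← hmix n, hG1 n, Matrix.mul_one]
  refine ⟨hT, fun n => ?_, augOnes_injective ?_, fun n => augOnes_injective ?_⟩
  · refine mul_left_cancel_of_mulVec_injective
      (mulVec_injective_of_rank_eq_card_width ((hrankX n).trans hcard.symm)) ?_
    rw [hfact, hT n]
  · rw [← hD0 m, hG1 m, Matrix.mul_one]
  · rw [← hD n, hG1 n, Matrix.mul_one]

/-- **Theorem 1: sufficient conditions for unique noiseless recovery.**
With the structured symbol matrices `X_n = [P_n 1; D_0 1; D_n 1]` (entries of the pilot
and data blocks in the alphabet `𝒳 ⊆ ℂ`) and subchannel responses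
`A_n ∈ ℂ^{(Q+1)×K_s}`, all of rank `Q+1`, suppose the noiseless measurements
`Y_n = X_n A_n` also factor as `Y_n = T_n V_n` with `T_n = [P_n 1; U_0 1; U_n 1]`
structured the same way (blocks `U_0, U_n` with entries in `𝒳`) and
`rank(T_n) = rank(V_n) = Q+1`. If (a) `[P 1]` has rank `Q+1` for the stacked pilot
matrix `P = [P_1; …; P_N]`, and (b) there exists `m` such that for every `n`
`(null([P_n 1]) + null([P_m 1])) ∩ null([D_0 1]) = {0}`, then `U_0 = D_0`,
`U_n = D_n` (hence `T_n = X_n`) and `V_n = A_n` for every `n`. -/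
theorem noiseless_unique_recovery
    (Q N Ks D0sz : ℕ) (hQ : 1 ≤ Q) (hN : 1 ≤ N) (hKs : Q + 1 ≤ Ks)
    (𝒳 : Set ℂ)
    (Psz Dsz : Fin N → ℕ)
    (Pmat : ∀ n : Fin N, Matrix (Fin (Psz n)) (Fin Q) ℂ)
    (D0mat : Matrix (Fin D0sz) (Fin Q) ℂ)
    (Dmat : ∀ n : Fin N, Matrix (Fin (Dsz n)) (Fin Q) ℂ)
    (hPX : ∀ n i j, Pmat n i j ∈ 𝒳)
    (hD0X : ∀ i j, D0mat i j ∈ 𝒳)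
    (hDX : ∀ n i j, Dmat n i j ∈ 𝒳)
    (A : ∀ n : Fin N, Matrix (Fin Q ⊕ Fin 1) (Fin Ks) ℂ)
    (hrankX : ∀ n : Fin N, (symbolMatrix (Pmat n) D0mat (Dmat n)).rank = Q + 1)
    (hrankA : ∀ n : Fin N, (A n).rank = Q + 1)
    (U0 : Matrix (Fin D0sz) (Fin Q) ℂ)
    (Un : ∀ n : Fin N, Matrix (Fin (Dsz n)) (Fin Q) ℂ)
    (hU0X : ∀ i j, U0 i j ∈ 𝒳)
    (hUnX : ∀ n i j, Un n i j ∈ 𝒳)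
    (V : ∀ n : Fin N, Matrix (Fin Q ⊕ Fin 1) (Fin Ks) ℂ)
    (hrankT : ∀ n : Fin N, (symbolMatrix (Pmat n) U0 (Un n)).rank = Q + 1)
    (hrankV : ∀ n : Fin N, (V n).rank = Q + 1)
    (hfact : ∀ n : Fin N,
      symbolMatrix (Pmat n) D0mat (Dmat n) * A n =
        symbolMatrix (Pmat n) U0 (Un n) * V n)
    (ha : (augOnes (pilotStack Psz Pmat)).rank = Q + 1)
    (hb : ∃ m : Fin N, ∀ n : Fin N,
      (LinearMap.ker (augOnes (Pmat n)).mulVecLin ⊔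
        LinearMap.ker (augOnes (Pmat m)).mulVecLin) ⊓
        LinearMap.ker (augOnes D0mat).mulVecLin = ⊥) :
    (∀ n : Fin N, symbolMatrix (Pmat n) U0 (Un n) = symbolMatrix (Pmat n) D0mat (Dmat n)) ∧
    (∀ n : Fin N, V n = A n) ∧
    U0 = D0mat ∧ (∀ n : Fin N, Un n = Dmat n) :=
  noiseless_unique_recovery_general Q N Ks D0sz Psz Dsz Pmat D0mat Dmat A hrankX U0 Un V hrankV
    hfact ha hb
end

section
/- Fix an integer Q ≥ 1 and an integer N ≥ 1, nonnegative integers P_1,…,P_N, D_0, matrices P_n ∈ ℂ^{P_n×Q} (n = 1,…,N) and D_0 ∈ ℂ^{D_0×Q}, and set P = [P_1; …; P_N] ∈ ℂ^{P×Q} with P = P_1+⋯+P_N. Assume (a) rank([P 1_P]) = Q+1, and (b) there exists m ∈ {1,…,N} such that for every n ∈ {1,…,N}, (null([P_n 1_{P_n}]) + null([P_m 1_{P_m}])) ∩ null([D_0 1_{D_0}]) = {0}. Let R_1,…,R_N ∈ ℂ^{(Q+1)×(Q+1)} be matrices satisfying [P_n 1_{P_n}](R_n − I_{Q+1}) = O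 for every n, and [D_0 1_{D_0}] R_n = [D_0 1_{D_0}] R_{n'} for all n, n' ∈ {1,…,N}. Then R_n = I_{Q+1} for every n. -/
/-!
Subtracting, `R_n - R_m = (R_n - I) - (R_m - I)` maps every vector into
`null([P_n 1]) + null([P_m 1])`, and `[D_0 1]` kills it, so condition (b) forces `R_n = R_m`
for all `n`. Then `[P 1](R_m - I) = O` blockwise, and the full column rank (a) gives `R_m = I`.
-/

open Matrix

namespace Matrix

variable {K l m n o : Type*}

theorem mulVec_mem_ker_mulVecLin_of_mul_eq_zero [CommSemiring K] [Fintype m] [Fintype n]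
    {A : Matrix l m K} {M : Matrix m n K} (h : A * M = 0) (x : n → K) :
    M *ᵥ x ∈ LinearMap.ker A.mulVecLin := by
  simp [mulVec_mulVec, h]

theorem eq_zero_of_mul_eq_zero_of_rank_eq_card [Field K] [Finite l] [Fintype m] [Fintype n]
    {A : Matrix l m K} {M : Matrix m n K} (hA : A.rank = Fintype.card m) (h : A * M = 0) :
    M = 0 := by
  have hM : M.rank = 0 := by have := rank_add_rank_le_card_of_mul_eq_zero h; omega
  rw [rank, Submodule.finrank_eq_zero, LinearMap.range_eq_bot] at hM
  rw [ext_iff_mulVec]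
  simpa using LinearMap.congr_fun hM

theorem eq_of_mul_sub_one_eq_zero_of_mul_eq_mul [CommRing K] [Fintype n] [DecidableEq n]
    {A : Matrix l n K} {B : Matrix m n K} {D : Matrix o n K} {S T : Matrix n n K}
    (hABD : (LinearMap.ker A.mulVecLin ⊔ LinearMap.ker B.mulVecLin) ⊓
      LinearMap.ker D.mulVecLin = ⊥)
    (hS : A * (S - 1) = 0) (hT : B * (T - 1) = 0) (hD : D * S = D * T) : S = T := by
  rw [← sub_eq_zero, ext_iff_mulVec]
  intro x
  have hsup : (S - T) *ᵥ x ∈ LinearMap.ker A.mulVecLin ⊔ LinearMap.ker B.mulVecLin := by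
    rw [← sub_sub_sub_cancel_right S T 1, sub_mulVec]
    exact Submodule.sub_mem_sup (mulVec_mem_ker_mulVecLin_of_mul_eq_zero hS x)
      (mulVec_mem_ker_mulVecLin_of_mul_eq_zero hT x)
  have hker : (S - T) *ᵥ x ∈ LinearMap.ker D.mulVecLin :=
    mulVec_mem_ker_mulVecLin_of_mul_eq_zero (by rw [Matrix.mul_sub, hD, sub_self]) x
  simpa [hABD] using Submodule.mem_inf.2 ⟨hsup, hker⟩

end Matrix

theorem augOnes_pilotStack_mul_eq_zero {Q N : ℕ} {k : Type*} [Fintype k] {Psz : Fin N → ℕ}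
    {Pmat : ∀ n : Fin N, Matrix (Fin (Psz n)) (Fin Q) ℂ} {M : Matrix (Fin Q ⊕ Fin 1) k ℂ}
    (h : ∀ n, augOnes (Pmat n) * M = 0) : augOnes (pilotStack Psz Pmat) * M = 0 := by
  ext i j
  exact congr_fun₂ (h i.1) i.2 j

theorem transition_matrices_are_identity_general
    (Q N D0sz : ℕ)
    (Psz : Fin N → ℕ)
    (Pmat : ∀ n : Fin N, Matrix (Fin (Psz n)) (Fin Q) ℂ)
    (D0mat : Matrix (Fin D0sz) (Fin Q) ℂ)
    (ha : (augOnes (pilotStack Psz Pmat)).rank = Q + 1)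
    (hb : ∃ m : Fin N, ∀ n : Fin N,
      (LinearMap.ker (augOnes (Pmat n)).mulVecLin ⊔
        LinearMap.ker (augOnes (Pmat m)).mulVecLin) ⊓
        LinearMap.ker (augOnes D0mat).mulVecLin = ⊥)
    (R : Fin N → Matrix (Fin Q ⊕ Fin 1) (Fin Q ⊕ Fin 1) ℂ)
    (hR1 : ∀ n : Fin N, augOnes (Pmat n) * (R n - 1) = 0)
    (hR2 : ∀ n n' : Fin N, augOnes D0mat * R n = augOnes D0mat * R n') :
    ∀ n : Fin N, R n = 1 := by
  obtain ⟨m, hm⟩ := hb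
  have hR : ∀ n, R n = R m := fun n =>
    eq_of_mul_sub_one_eq_zero_of_mul_eq_mul (hm n) (hR1 n) (hR1 m) (hR2 n m)
  have hstack : augOnes (pilotStack Psz Pmat) * (R m - 1) = 0 :=
    augOnes_pilotStack_mul_eq_zero fun n => hR n ▸ hR1 n
  have hRm : R m - 1 = 0 :=
    eq_zero_of_mul_eq_zero_of_rank_eq_card (by simpa using ha) hstack
  intro n
  rw [hR n, sub_eq_zero.1 hRm]

/-- **Algebraic core of the proof of Theorem 1.** Under conditions (a) and (b) of
Theorem 1, any matrices `R_1, …, R_N ∈ ℂ^{(Q+1)×(Q+1)}` satisfying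
`[P_n 1](R_n - I) = O` for every `n` and `[D_0 1] R_n = [D_0 1] R_{n'}` for all `n, n'`
must all equal the identity. -/
theorem transition_matrices_are_identity
    (Q N D0sz : ℕ) (hQ : 1 ≤ Q) (hN : 1 ≤ N)
    (Psz : Fin N → ℕ)
    (Pmat : ∀ n : Fin N, Matrix (Fin (Psz n)) (Fin Q) ℂ)
    (D0mat : Matrix (Fin D0sz) (Fin Q) ℂ)
    (ha : (augOnes (pilotStack Psz Pmat)).rank = Q + 1)
    (hb : ∃ m : Fin N, ∀ n : Fin N,
      (LinearMap.ker (augOnes (Pmat n)).mulVecLin ⊔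
        LinearMap.ker (augOnes (Pmat m)).mulVecLin) ⊓
        LinearMap.ker (augOnes D0mat).mulVecLin = ⊥)
    (R : Fin N → Matrix (Fin Q ⊕ Fin 1) (Fin Q ⊕ Fin 1) ℂ)
    (hR1 : ∀ n : Fin N, augOnes (Pmat n) * (R n - 1) = 0)
    (hR2 : ∀ n n' : Fin N, augOnes D0mat * R n = augOnes D0mat * R n') :
    ∀ n : Fin N, R n = 1 :=
  transition_matrices_are_identity_general Q N D0sz Psz Pmat D0mat ha hb R hR1 hR2
end

section
/- Let Q = 3, N = 2, and define P_1 ∈ ℂ^{3×3}, P_2 ∈ ℂ^{2×3}, D_0 ∈ ℂ^{3×3} by: [P_1 1_3] has rows (1,1,1,1), (−1,−1,1,1), (−1,1,−1,1); [P_2 1_2] has rows (1,−1,−1,1), (1,1,1,1); and [D_0 1_3] has rows (−1,−1,1,1), (−1,1,−1,1), (1,−1,−1,1). Let P = [P_1; P_2] ∈ ℂ^{5×3}. Then: (a) rank([P 1_5]) = 4; (b) there exists m ∈ {1,2} (namely m = 1) such that for every n ∈ {1,2}, (null([P_n 1_{P_n}]) + null([P_m 1_{P_m}])) ∩ null([D_0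 1_3]) = {0}; but (c) there is no m ∈ {1,2} with rank([P_m 1_{P_m}]) = 4. In particular, the sufficient conditions (14) of Theorem 1 are strictly weaker than the rank conditions (19). -/
open Matrix

/-- `[P_1 1_3]`: rows `(1,1,1,1), (−1,−1,1,1), (−1,1,−1,1)` from the 4×4 Hadamard matrix. -/
def augP1 : Matrix (Fin 3) (Fin 4) ℂ :=
  !![1, 1, 1, 1; -1, -1, 1, 1; -1, 1, -1, 1]

/-- `[P_2 1_2]`: rows `(1,−1,−1,1), (1,1,1,1)`. -/
def augP2 : Matrix (Fin 2) (Fin 4) ℂ :=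
  !![1, -1, -1, 1; 1, 1, 1, 1]

/-- `[D_0 1_3]`: rows `(−1,−1,1,1), (−1,1,−1,1), (1,−1,−1,1)`. -/
def augD0 : Matrix (Fin 3) (Fin 4) ℂ :=
  !![-1, -1, 1, 1; -1, 1, -1, 1; 1, -1, -1, 1]

/-- `[P 1_5]` where `P = [P_1; P_2]`: the vertical concatenation of `[P_1 1]` and `[P_2 1]`. -/
def augP : Matrix (Fin 3 ⊕ Fin 2) (Fin 4) ℂ :=
  Matrix.fromRows augP1 augP2

/-- **Separating example (Q = 3, N = 2).** For the matrices above: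
(a) `rank([P 1_5]) = 4`; (b) with `m = 1`, for both `n = 1, 2`,
`(null([P_n 1]) + null([P_1 1])) ∩ null([D_0 1]) = {0}` (subspaces of `ℂ^4`);
but (c) neither `[P_1 1]` nor `[P_2 1]` has rank `4`. Hence the sufficient conditions
(14) of Theorem 1 are strictly weaker than the rank conditions (19). -/
theorem separating_example :
    augP.rank = 4 ∧
    (((LinearMap.ker augP1.mulVecLin ⊔ LinearMap.ker augP1.mulVecLin) ⊓
        LinearMap.ker augD0.mulVecLin = ⊥) ∧
      ((LinearMap.ker augP2.mulVecLin ⊔ LinearMap.ker augP1.mulVecLin) ⊓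
        LinearMap.ker augD0.mulVecLin = ⊥)) ∧
    (¬ augP1.rank = 4 ∧ ¬ augP2.rank = 4) := by
  refine ⟨?_, ⟨?_, ?_⟩, ?_, ?_⟩
  · -- rank augP = 4
    have hker : LinearMap.ker augP.mulVecLin = ⊥ := by
      rw [eq_bot_iff]
      intro x hx
      rw [LinearMap.mem_ker] at hx
      simp [augP, Matrix.fromRows_mulVec, augP1, augP2, Matrix.mulVecLin_apply,
        Matrix.mulVec, dotProduct, Fin.sum_univ_four, funext_iff,
        Sum.forall, Fin.forall_fin_succ] at hx
      obtain ⟨⟨e1, e2, e3⟩, f1, f2⟩ := hx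
      simp only [Submodule.mem_bot]
      funext i
      fin_cases i
      · show x 0 = 0; linear_combination (e1 - e2 - e3 + f1) / 4
      · show x 1 = 0; linear_combination (e1 - e2 + e3 - f1) / 4
      · show x 2 = 0; linear_combination (e1 + e2 - e3 - f1) / 4
      · show x 3 = 0; linear_combination (e1 + e2 + e3 + f1) / 4
    have h := LinearMap.finrank_range_add_finrank_ker augP.mulVecLin
    rw [hker, finrank_bot] at h
    rw [Matrix.rank]
    simpa using h
  · -- (ker P1 ⊔ ker P1) ⊓ ker D0 = ⊥
    rw [sup_idem, eq_bot_iff]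
    intro x hx
    rw [Submodule.mem_inf, LinearMap.mem_ker, LinearMap.mem_ker] at hx
    obtain ⟨h1, h2⟩ := hx
    simp [augP1, Matrix.mulVecLin_apply, Matrix.mulVec, dotProduct,
      Fin.sum_univ_four, funext_iff, Fin.forall_fin_succ] at h1
    simp [augD0, Matrix.mulVecLin_apply, Matrix.mulVec, dotProduct,
      Fin.sum_univ_four, funext_iff, Fin.forall_fin_succ] at h2
    obtain ⟨e1, e2, e3⟩ := h1
    obtain ⟨d1, d2, d3⟩ := h2
    simp only [Submodule.mem_bot]
    funext i
    fin_cases i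
    · show x 0 = 0; linear_combination (e1 - e2 - e3 + d3) / 4
    · show x 1 = 0; linear_combination (e1 - e2 + e3 - d3) / 4
    · show x 2 = 0; linear_combination (e1 + e2 - e3 - d3) / 4
    · show x 3 = 0; linear_combination (e1 + e2 + e3 + d3) / 4
  · -- (ker P2 ⊔ ker P1) ⊓ ker D0 = ⊥
    rw [eq_bot_iff]
    intro x hx
    rw [Submodule.mem_inf] at hx
    obtain ⟨hsup, hd⟩ := hx
    rw [Submodule.mem_sup] at hsup
    obtain ⟨y, hy, z, hz, rfl⟩ := hsup
    rw [LinearMap.mem_ker] at hy hz hd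
    simp [augP2, Matrix.mulVecLin_apply, Matrix.mulVec, dotProduct,
      Fin.sum_univ_four, funext_iff, Fin.forall_fin_succ] at hy
    simp [augP1, Matrix.mulVecLin_apply, Matrix.mulVec, dotProduct,
      Fin.sum_univ_four, funext_iff, Fin.forall_fin_succ] at hz
    simp [augD0, Matrix.mulVecLin_apply, Matrix.mulVec, dotProduct,
      Fin.sum_univ_four, funext_iff, Fin.forall_fin_succ] at hd
    obtain ⟨g1, g2⟩ := hy
    obtain ⟨e1, e2, e3⟩ := hz
    obtain ⟨d1, d2, d3⟩ := hd
    simp only [Submodule.mem_bot]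
    funext i
    fin_cases i
    · show y 0 + z 0 = 0; linear_combination (g2 + e1 - d1 - d2 + d3) / 4
    · show y 1 + z 1 = 0; linear_combination (g2 + e1 - d1 + d2 - d3) / 4
    · show y 2 + z 2 = 0; linear_combination (g2 + e1 + d1 - d2 - d3) / 4
    · show y 3 + z 3 = 0; linear_combination (g2 + e1 + d1 + d2 + d3) / 4
  · have := Matrix.rank_le_card_height augP1
    simp at this; omega
  · have := Matrix.rank_le_card_height augP2
    simp at this; omega
end
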